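/- arXiv:1708.05397 — 3 statements merged into one kernel-verified Lean document; each statement's English description precedes it below -/
import Mathlib

section
/- If f is perfectly harmonic on an open set Ω ⊆ ℝ^N, then the function h(x, s, t) = f(x) − arctan(t/s) is perfectly harmonic on the open set Ω × {(s,t) ∈ ℝ² : s ≠ 0} ⊆ ℝ^{N+2}. -/
noncomputable section

/-- The partial derivative `∂f/∂xᵢ` of a function on `ℝ^N`. -/
noncomputable def pd {N : ℕ} (f : (Fin N → ℝ) → ℝ) (i : Fin N) (x : Fin N → ℝ) : ℝ :=
  fderiv ℝ f x (Pi.single i 1)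

/-- The Laplacian `Δf = Σᵢ ∂²f/∂xᵢ²`. -/
noncomputable def lap {N : ℕ} (f : (Fin N → ℝ) → ℝ) (x : Fin N → ℝ) : ℝ :=
  ∑ i, pd (pd f i) i x

/-- The ∞-Laplacian `Δ_∞ f = Σᵢⱼ (∂f/∂xᵢ)(∂f/∂xⱼ)(∂²f/∂xᵢ∂xⱼ)`. -/
noncomputable def infLap {N : ℕ} (f : (Fin N → ℝ) → ℝ) (x : Fin N → ℝ) : ℝ :=
  ∑ i, ∑ j, pd f i x * pd f j x * pd (pd f j) i x

/-- The 1-Laplacian `Δ₁f = |∇f|²Δf − Δ_∞f`. -/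
noncomputable def lap1 {N : ℕ} (f : (Fin N → ℝ) → ℝ) (x : Fin N → ℝ) : ℝ :=
  (∑ i, pd f i x ^ 2) * lap f x - infLap f x

/-- A C² function is perfectly harmonic on `Ω` if `Δf = 0` and `Δ_∞ f = 0` on `Ω`. -/
def PerfectlyHarmonic {N : ℕ} (f : (Fin N → ℝ) → ℝ) (Ω : Set (Fin N → ℝ)) : Prop :=
  ContDiffOn ℝ 2 f Ω ∧ ∀ x ∈ Ω, lap f x = 0 ∧ infLap f x = 0

/-- Two C² functions `u, v` are orthogonal twin-harmonics on `Ω` if at every point of `Ω`: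
`v·Δu = u·Δv`, `v·Δ_∞u = u·Δ_∞v`, `|∇u|² = |∇v|²`, and `∇u·∇v = 0`. -/
def TwinHarmonics {N : ℕ} (u v : (Fin N → ℝ) → ℝ) (Ω : Set (Fin N → ℝ)) : Prop :=
  ContDiffOn ℝ 2 u Ω ∧ ContDiffOn ℝ 2 v Ω ∧ ∀ x ∈ Ω,
    v x * lap u x = u x * lap v x ∧
    v x * infLap u x = u x * infLap v x ∧
    (∑ i, pd u i x ^ 2) = (∑ i, pd v i x ^ 2) ∧
    (∑ i, pd u i x * pd v i x) = 0

/-!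
The function is a separated sum `f(x) + (-θ)(s, t)` with `θ = arctan (t / s)` the polar angle.
For a separated sum the gradient splits into the two gradients and the Hessian is block diagonal,
so `Δ` and `Δ_∞` are both additive over the two blocks of variables (the mixed terms of `Δ_∞`
vanish). Negation changes the sign of `Δ` and `Δ_∞`, and `θ` is perfectly harmonic on `s ≠ 0`:
it is harmonic, and `∇θ = (-t, s) / (s² + t²)` is tangent to the circles about the origin while
`|∇θ|² = 1 / (s² + t²)` is constant on them, so `Δ_∞θ = ½ ∇θ · ∇|∇θ|² = 0`.
-/

open Real Filter Topology

section PartialDerivatives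

variable {n m : ℕ}

lemma pd_add {u v : (Fin n → ℝ) → ℝ} {x : Fin n → ℝ} (hu : DifferentiableAt ℝ u x)
    (hv : DifferentiableAt ℝ v x) (i : Fin n) :
    pd (fun x => u x + v x) i x = pd u i x + pd v i x := by
  simp only [pd, fderiv_fun_add hu hv]
  rfl

lemma pd_neg (u : (Fin n → ℝ) → ℝ) (i : Fin n) : pd (-u) i = -pd u i := by
  funext x
  simp only [pd, fderiv_neg, Pi.neg_apply]
  rfl

lemma lap_neg (u : (Fin n → ℝ) → ℝ) : lap (-u) = -lap u := by
  funext x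
  simp only [lap, pd_neg, Pi.neg_apply, Finset.sum_neg_distrib]

lemma infLap_neg (u : (Fin n → ℝ) → ℝ) : infLap (-u) = -infLap u := by
  funext x
  simp only [infLap, pd_neg, Pi.neg_apply, neg_mul, mul_neg, neg_neg, Finset.sum_neg_distrib]

lemma pd_eq_deriv_update {g : (Fin n → ℝ) → ℝ} {y : Fin n → ℝ} (hg : DifferentiableAt ℝ g y)
    (i : Fin n) : pd g i y = deriv (fun s => g (Function.update y i s)) (y i) := by
  have hg' : HasFDerivAt g (fderiv ℝ g y) (Function.update y i (y i)) := by
    rw [Function.update_eq_self]; exact hg.hasFDerivAt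
  exact (hg'.comp_hasDerivAt (y i) (hasDerivAt_update y i (y i))).deriv.symm

lemma pd_comp_clm {g : (Fin m → ℝ) → ℝ} (L : (Fin n → ℝ) →L[ℝ] (Fin m → ℝ)) {z : Fin n → ℝ}
    (hg : DifferentiableAt ℝ g (L z)) (i : Fin n) :
    pd (fun z => g (L z)) i z = fderiv ℝ g (L z) (L (Pi.single i 1)) := by
  change fderiv ℝ (g ∘ L) z _ = _
  rw [(hg.hasFDerivAt.comp z L.hasFDerivAt).fderiv, ContinuousLinearMap.comp_apply]

lemma pd_congr_of_eventuallyEq {u v : (Fin n → ℝ) → ℝ} {x : Fin n → ℝ} (h : u =ᶠ[𝓝 x] v)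
    (i : Fin n) : pd u i x = pd v i x := by
  rw [pd, pd, h.fderiv_eq]

lemma ContDiffAt.differentiableAt_pd {u : (Fin n → ℝ) → ℝ} {x : Fin n → ℝ}
    (hu : ContDiffAt ℝ 2 u x) (i : Fin n) : DifferentiableAt ℝ (pd u i) x :=
  ((hu.fderiv_right (m := 1) (by norm_num)).clm_apply contDiffAt_const).differentiableAt
    (by norm_num)

lemma eventually_differentiableAt_comp {g : (Fin m → ℝ) → ℝ}
    (L : (Fin n → ℝ) →L[ℝ] (Fin m → ℝ)) {z : Fin n → ℝ} (hg : ContDiffAt ℝ 2 g (L z)) :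
    ∀ᶠ z' in 𝓝 z, DifferentiableAt ℝ g (L z') :=
  (L.continuous.tendsto z).eventually
    ((hg.eventually (by simp)).mono fun _ h => h.differentiableAt (by norm_num))

lemma isOpen_apply_ne_zero (i : Fin n) : IsOpen {y : Fin n → ℝ | y i ≠ 0} :=
  isOpen_compl_singleton.preimage (continuous_apply i)

end PartialDerivatives

theorem PerfectlyHarmonic.neg {n : ℕ} {u : (Fin n → ℝ) → ℝ} {Ω : Set (Fin n → ℝ)}
    (h : PerfectlyHarmonic u Ω) : PerfectlyHarmonic (-u) Ω :=
  ⟨h.1.neg, fun x hx => by simp [lap_neg, infLap_neg, h.2 x hx]⟩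

section Separated

variable (N M : ℕ)

def castAddProj : (Fin (N + M) → ℝ) →L[ℝ] (Fin N → ℝ) :=
  ContinuousLinearMap.pi fun i => ContinuousLinearMap.proj (Fin.castAdd M i)

def natAddProj : (Fin (N + M) → ℝ) →L[ℝ] (Fin M → ℝ) :=
  ContinuousLinearMap.pi fun i => ContinuousLinearMap.proj (Fin.natAdd N i)

variable {N M}

@[simp] lemma castAddProj_single_castAdd (i : Fin N) :
    castAddProj N M (Pi.single (Fin.castAdd M i) 1) = Pi.single i 1 := by
  ext j
  simp [castAddProj, Pi.single_apply]

@[simp] lemma castAddProj_single_natAdd (i : Fin M) :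
    castAddProj N M (Pi.single (Fin.natAdd N i) 1) = 0 := by
  ext j
  simp [castAddProj, Pi.single_apply, Fin.ext_iff]
  omega

@[simp] lemma natAddProj_single_castAdd (i : Fin N) :
    natAddProj N M (Pi.single (Fin.castAdd M i) 1) = 0 := by
  ext j
  simp [natAddProj, Pi.single_apply, Fin.ext_iff]
  omega

@[simp] lemma natAddProj_single_natAdd (i : Fin M) :
    natAddProj N M (Pi.single (Fin.natAdd N i) 1) = Pi.single i 1 := by
  ext j
  simp [natAddProj, Pi.single_apply]

def sepSum (u : (Fin N → ℝ) → ℝ) (v : (Fin M → ℝ) → ℝ) : (Fin (N + M) → ℝ) → ℝ :=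
  fun z => u (castAddProj N M z) + v (natAddProj N M z)

variable {z : Fin (N + M) → ℝ}

lemma pd_comp_castAddProj_castAdd {g : (Fin N → ℝ) → ℝ}
    (hg : DifferentiableAt ℝ g (castAddProj N M z)) (i : Fin N) :
    pd (fun z => g (castAddProj N M z)) (Fin.castAdd M i) z = pd g i (castAddProj N M z) := by
  rw [pd_comp_clm _ hg, castAddProj_single_castAdd, pd]

lemma pd_comp_castAddProj_natAdd {g : (Fin N → ℝ) → ℝ}
    (hg : DifferentiableAt ℝ g (castAddProj N M z)) (i : Fin M) :
    pd (fun z => g (castAddProj N M z)) (Fin.natAdd N i) z = 0 := by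
  rw [pd_comp_clm _ hg, castAddProj_single_natAdd, map_zero]

lemma pd_comp_natAddProj_castAdd {g : (Fin M → ℝ) → ℝ}
    (hg : DifferentiableAt ℝ g (natAddProj N M z)) (i : Fin N) :
    pd (fun z => g (natAddProj N M z)) (Fin.castAdd M i) z = 0 := by
  rw [pd_comp_clm _ hg, natAddProj_single_castAdd, map_zero]

lemma pd_comp_natAddProj_natAdd {g : (Fin M → ℝ) → ℝ}
    (hg : DifferentiableAt ℝ g (natAddProj N M z)) (i : Fin M) :
    pd (fun z => g (natAddProj N M z)) (Fin.natAdd N i) z = pd g i (natAddProj N M z) := by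
  rw [pd_comp_clm _ hg, natAddProj_single_natAdd, pd]

variable {u : (Fin N → ℝ) → ℝ} {v : (Fin M → ℝ) → ℝ}

lemma pd_sepSum_castAdd (hu : DifferentiableAt ℝ u (castAddProj N M z))
    (hv : DifferentiableAt ℝ v (natAddProj N M z)) (i : Fin N) :
    pd (sepSum u v) (Fin.castAdd M i) z = pd u i (castAddProj N M z) := by
  unfold sepSum
  rw [pd_add (u := fun z => u (castAddProj N M z)) (v := fun z => v (natAddProj N M z))
    (hu.comp z (castAddProj N M).differentiableAt) (hv.comp z (natAddProj N M).differentiableAt),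
    pd_comp_castAddProj_castAdd hu, pd_comp_natAddProj_castAdd hv, add_zero]

lemma pd_sepSum_natAdd (hu : DifferentiableAt ℝ u (castAddProj N M z))
    (hv : DifferentiableAt ℝ v (natAddProj N M z)) (i : Fin M) :
    pd (sepSum u v) (Fin.natAdd N i) z = pd v i (natAddProj N M z) := by
  unfold sepSum
  rw [pd_add (u := fun z => u (castAddProj N M z)) (v := fun z => v (natAddProj N M z))
    (hu.comp z (castAddProj N M).differentiableAt) (hv.comp z (natAddProj N M).differentiableAt),
    pd_comp_castAddProj_natAdd hu, pd_comp_natAddProj_natAdd hv, zero_add]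

lemma pd_sepSum_castAdd_eventuallyEq (hu : ContDiffAt ℝ 2 u (castAddProj N M z))
    (hv : ContDiffAt ℝ 2 v (natAddProj N M z)) (j : Fin N) :
    pd (sepSum u v) (Fin.castAdd M j) =ᶠ[𝓝 z] fun z => pd u j (castAddProj N M z) := by
  filter_upwards [eventually_differentiableAt_comp _ hu, eventually_differentiableAt_comp _ hv]
    with z hu hv
  exact pd_sepSum_castAdd hu hv j

lemma pd_sepSum_natAdd_eventuallyEq (hu : ContDiffAt ℝ 2 u (castAddProj N M z))
    (hv : ContDiffAt ℝ 2 v (natAddProj N M z)) (j : Fin M) :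
    pd (sepSum u v) (Fin.natAdd N j) =ᶠ[𝓝 z] fun z => pd v j (natAddProj N M z) := by
  filter_upwards [eventually_differentiableAt_comp _ hu, eventually_differentiableAt_comp _ hv]
    with z hu hv
  exact pd_sepSum_natAdd hu hv j

lemma pd_pd_sepSum_castAdd_castAdd (hu : ContDiffAt ℝ 2 u (castAddProj N M z))
    (hv : ContDiffAt ℝ 2 v (natAddProj N M z)) (i j : Fin N) :
    pd (pd (sepSum u v) (Fin.castAdd M j)) (Fin.castAdd M i) z =
      pd (pd u j) i (castAddProj N M z) := by
  rw [pd_congr_of_eventuallyEq (pd_sepSum_castAdd_eventuallyEq hu hv j),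
    pd_comp_castAddProj_castAdd (hu.differentiableAt_pd j)]

lemma pd_pd_sepSum_castAdd_natAdd (hu : ContDiffAt ℝ 2 u (castAddProj N M z))
    (hv : ContDiffAt ℝ 2 v (natAddProj N M z)) (i : Fin M) (j : Fin N) :
    pd (pd (sepSum u v) (Fin.castAdd M j)) (Fin.natAdd N i) z = 0 := by
  rw [pd_congr_of_eventuallyEq (pd_sepSum_castAdd_eventuallyEq hu hv j),
    pd_comp_castAddProj_natAdd (hu.differentiableAt_pd j)]

lemma pd_pd_sepSum_natAdd_castAdd (hu : ContDiffAt ℝ 2 u (castAddProj N M z))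
    (hv : ContDiffAt ℝ 2 v (natAddProj N M z)) (i : Fin N) (j : Fin M) :
    pd (pd (sepSum u v) (Fin.natAdd N j)) (Fin.castAdd M i) z = 0 := by
  rw [pd_congr_of_eventuallyEq (pd_sepSum_natAdd_eventuallyEq hu hv j),
    pd_comp_natAddProj_castAdd (hv.differentiableAt_pd j)]

lemma pd_pd_sepSum_natAdd_natAdd (hu : ContDiffAt ℝ 2 u (castAddProj N M z))
    (hv : ContDiffAt ℝ 2 v (natAddProj N M z)) (i j : Fin M) :
    pd (pd (sepSum u v) (Fin.natAdd N j)) (Fin.natAdd N i) z =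
      pd (pd v j) i (natAddProj N M z) := by
  rw [pd_congr_of_eventuallyEq (pd_sepSum_natAdd_eventuallyEq hu hv j),
    pd_comp_natAddProj_natAdd (hv.differentiableAt_pd j)]

lemma lap_sepSum (hu : ContDiffAt ℝ 2 u (castAddProj N M z))
    (hv : ContDiffAt ℝ 2 v (natAddProj N M z)) :
    lap (sepSum u v) z = lap u (castAddProj N M z) + lap v (natAddProj N M z) := by
  simp only [lap, Fin.sum_univ_add, pd_pd_sepSum_castAdd_castAdd hu hv,
    pd_pd_sepSum_natAdd_natAdd hu hv]

lemma infLap_sepSum (hu : ContDiffAt ℝ 2 u (castAddProj N M z))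
    (hv : ContDiffAt ℝ 2 v (natAddProj N M z)) :
    infLap (sepSum u v) z = infLap u (castAddProj N M z) + infLap v (natAddProj N M z) := by
  have hu₁ := hu.differentiableAt (by norm_num)
  have hv₁ := hv.differentiableAt (by norm_num)
  simp only [infLap, Fin.sum_univ_add, pd_sepSum_castAdd hu₁ hv₁, pd_sepSum_natAdd hu₁ hv₁,
    pd_pd_sepSum_castAdd_castAdd hu hv, pd_pd_sepSum_castAdd_natAdd hu hv,
    pd_pd_sepSum_natAdd_castAdd hu hv, pd_pd_sepSum_natAdd_natAdd hu hv, mul_zero,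
    Finset.sum_const_zero, add_zero, zero_add]

theorem PerfectlyHarmonic.sepSum {Ω : Set (Fin N → ℝ)} {Ω' : Set (Fin M → ℝ)} (hΩ : IsOpen Ω)
    (hΩ' : IsOpen Ω') (hu : PerfectlyHarmonic u Ω) (hv : PerfectlyHarmonic v Ω') :
    PerfectlyHarmonic (sepSum u v) {z | castAddProj N M z ∈ Ω ∧ natAddProj N M z ∈ Ω'} := by
  refine ⟨(hu.1.comp (castAddProj N M).contDiff.contDiffOn fun z hz => hz.1).add
    (hv.1.comp (natAddProj N M).contDiff.contDiffOn fun z hz => hz.2), fun z ⟨hzu, hzv⟩ => ?_⟩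
  have hu₂ := hu.1.contDiffAt (hΩ.mem_nhds hzu)
  have hv₂ := hv.1.contDiffAt (hΩ'.mem_nhds hzv)
  rw [lap_sepSum hu₂ hv₂, infLap_sepSum hu₂ hv₂, (hu.2 _ hzu).1, (hu.2 _ hzu).2, (hv.2 _ hzv).1,
    (hv.2 _ hzv).2]
  norm_num

end Separated

section Plane

variable {y : Fin 2 → ℝ}

lemma differentiableAt_arctan_div (hy : y 0 ≠ 0) :
    DifferentiableAt ℝ (fun y : Fin 2 → ℝ => arctan (y 1 / y 0)) y :=
  (by fun_prop (disch := exact hy) : DifferentiableAt ℝ (fun y : Fin 2 → ℝ => y 1 / y 0) y).arctan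

lemma pd_arctan_div_zero (hy : y 0 ≠ 0) :
    pd (fun y : Fin 2 → ℝ => arctan (y 1 / y 0)) 0 y = -y 1 / (y 0 ^ 2 + y 1 ^ 2) := by
  rw [pd_eq_deriv_update (differentiableAt_arctan_div hy)]
  simp only [Function.update_self, Function.update_of_ne (by decide : (1 : Fin 2) ≠ 0)]
  have h : HasDerivAt (fun s => arctan (y 1 / s)) _ (y 0) :=
    ((hasDerivAt_const (y 0) (y 1)).fun_div (hasDerivAt_id' (y 0)) hy).arctan
  rw [h.deriv]
  field_simp
  ring

lemma pd_arctan_div_one (hy : y 0 ≠ 0) :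
    pd (fun y : Fin 2 → ℝ => arctan (y 1 / y 0)) 1 y = y 0 / (y 0 ^ 2 + y 1 ^ 2) := by
  rw [pd_eq_deriv_update (differentiableAt_arctan_div hy)]
  simp only [Function.update_self, Function.update_of_ne (by decide : (0 : Fin 2) ≠ 1)]
  have h : HasDerivAt (fun t => arctan (t / y 0)) _ (y 1) :=
    ((hasDerivAt_id' _).div_const _).arctan
  rw [h.deriv]
  field_simp

lemma pd_linear_div_zero (a b : ℝ) (hr : y 0 ^ 2 + y 1 ^ 2 ≠ 0) :
    pd (fun y : Fin 2 → ℝ => (a * y 0 + b * y 1) / (y 0 ^ 2 + y 1 ^ 2)) 0 y =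
      (a * (y 0 ^ 2 + y 1 ^ 2) - (a * y 0 + b * y 1) * (2 * y 0)) / (y 0 ^ 2 + y 1 ^ 2) ^ 2 := by
  rw [pd_eq_deriv_update (by fun_prop (disch := exact hr))]
  simp only [Function.update_self, Function.update_of_ne (by decide : (1 : Fin 2) ≠ 0)]
  have h : HasDerivAt (fun s => (a * s + b * y 1) / (s ^ 2 + y 1 ^ 2)) _ (y 0) :=
    (((hasDerivAt_id' _).const_mul a).add_const _).fun_div ((hasDerivAt_pow 2 _).add_const _) hr
  rw [h.deriv]
  ring

lemma pd_linear_div_one (a b : ℝ) (hr : y 0 ^ 2 + y 1 ^ 2 ≠ 0) :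
    pd (fun y : Fin 2 → ℝ => (a * y 0 + b * y 1) / (y 0 ^ 2 + y 1 ^ 2)) 1 y =
      (b * (y 0 ^ 2 + y 1 ^ 2) - (a * y 0 + b * y 1) * (2 * y 1)) / (y 0 ^ 2 + y 1 ^ 2) ^ 2 := by
  rw [pd_eq_deriv_update (by fun_prop (disch := exact hr))]
  simp only [Function.update_self, Function.update_of_ne (by decide : (0 : Fin 2) ≠ 1)]
  have h : HasDerivAt (fun t => (a * y 0 + b * t) / (y 0 ^ 2 + t ^ 2)) _ (y 1) :=
    (((hasDerivAt_id' _).const_mul b).const_add _).fun_div ((hasDerivAt_pow 2 _).const_add _) hr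
  rw [h.deriv]
  ring

theorem perfectlyHarmonic_arctan_div :
    PerfectlyHarmonic (fun y : Fin 2 → ℝ => arctan (y 1 / y 0)) {y | y 0 ≠ 0} := by
  refine ⟨fun y hy => ?_, fun y (hy : y 0 ≠ 0) => ?_⟩
  · exact ((contDiff_apply ℝ ℝ 1).contDiffAt.div (contDiff_apply ℝ ℝ 0).contDiffAt
      hy).arctan.contDiffWithinAt
  have hr : y 0 ^ 2 + y 1 ^ 2 ≠ 0 := by positivity
  have h0 : pd (fun y : Fin 2 → ℝ => arctan (y 1 / y 0)) 0 =ᶠ[𝓝 y]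
      fun y => (0 * y 0 + -1 * y 1) / (y 0 ^ 2 + y 1 ^ 2) := by
    filter_upwards [(isOpen_apply_ne_zero 0).mem_nhds hy] with y hy
    rw [pd_arctan_div_zero hy]
    ring
  have h1 : pd (fun y : Fin 2 → ℝ => arctan (y 1 / y 0)) 1 =ᶠ[𝓝 y]
      fun y => (1 * y 0 + 0 * y 1) / (y 0 ^ 2 + y 1 ^ 2) := by
    filter_upwards [(isOpen_apply_ne_zero 0).mem_nhds hy] with y hy
    rw [pd_arctan_div_one hy]
    ring
  simp only [lap, infLap, Fin.sum_univ_two, pd_congr_of_eventuallyEq h0,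
    pd_congr_of_eventuallyEq h1, pd_linear_div_zero _ _ hr, pd_linear_div_one _ _ hr,
    pd_arctan_div_zero hy, pd_arctan_div_one hy]
  constructor <;> field_simp <;> ring

end Plane

/-- If `f` is perfectly harmonic on an open `Ω ⊆ ℝ^N`, then
`h(x,s,t) = f(x) − arctan(t/s)` is perfectly harmonic on
`Ω × {(s,t) : s ≠ 0} ⊆ ℝ^(N+2)`. -/
theorem perfectlyHarmonic_sub_arctan {N : ℕ}
    (f : (Fin N → ℝ) → ℝ) (Ω : Set (Fin N → ℝ)) (hΩ : IsOpen Ω)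
    (hf : PerfectlyHarmonic f Ω) :
    PerfectlyHarmonic
      (fun x : Fin (N + 2) → ℝ =>
        f (fun i => x (Fin.castAdd 2 i)) -
          Real.arctan (x (Fin.natAdd N 1) / x (Fin.natAdd N 0)))
      {x : Fin (N + 2) → ℝ |
        (fun i => x (Fin.castAdd 2 i)) ∈ Ω ∧ x (Fin.natAdd N 0) ≠ 0} := by
  have hfun : (fun x : Fin (N + 2) → ℝ =>
      f (fun i => x (Fin.castAdd 2 i)) - arctan (x (Fin.natAdd N 1) / x (Fin.natAdd N 0))) =
      sepSum f (-fun y : Fin 2 → ℝ => arctan (y 1 / y 0)) := by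
    funext x
    exact sub_eq_add_neg _ _
  rw [hfun]
  exact hf.sepSum hΩ (isOpen_apply_ne_zero 0) perfectlyHarmonic_arctan_div.neg

end
end

section
/- Let h be a holomorphic function on an open set Ω ⊆ ℂ^m belonging to the class 𝒯^m. Identify ℂ^m with ℝ^{2m} via z_k = x_k + i·y_k and set u(x,y) = Re h(z) and v(x,y) = Im h(z). Then u and v are orthogonal twin-harmonics on the corresponding open subset of ℝ^{2m}: at every point, v·Δu = u·Δv, v·Δ_∞u = u·Δ_∞v, |∇u|² = |∇v|², and ∇u·∇v = 0. -/
/-!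
Write `H = h ∘ emb`. By the chain rule `∂H/∂x_k = h_{z_k}` and `∂H/∂y_k = i h_{z_k}`, and
differentiating once more, `∂²H/∂x_k∂x_l = h_{z_kz_l} = -∂²H/∂y_k∂y_l`. Taking real and imaginary
parts, `Δu = Δv = 0`, `∇u·∇v = 0` and `|∇u|² = |∇v|² = Σ_k |h_{z_k}|²` (Cauchy–Riemann), while
`Δ_∞u + i Δ_∞v = Σ_{i,j} conj(h_{z_iz_j}) h_{z_i} h_{z_j} = μ h`, so `v Δ_∞u = μ u v = u Δ_∞v`.

The second derivatives exist because a directional derivative `z ↦ Df(z) v` of a holomorphic map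
of several variables is again holomorphic: the difference quotients converge to it locally
uniformly, by a Schwarz-lemma estimate of the Taylor remainder, and a locally uniform limit of
holomorphic maps is holomorphic, by Cauchy estimates on their derivatives.
-/

noncomputable section

/-- The complex partial derivative `h_{zᵢ}` of a function on `ℂ^m`. -/
noncomputable def cpd {m : ℕ} (h : (Fin m → ℂ) → ℂ) (i : Fin m) (z : Fin m → ℂ) : ℂ :=
  fderiv ℂ h z (Pi.single i 1)

/-- The identification `ℝ^(m+m) ≅ ℂ^m`, `(x, y) ↦ x + i·y` componentwise. -/
noncomputable def emb {m : ℕ} (w : Fin (m + m) → ℝ) : Fin m → ℂ :=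
  fun k => (w (Fin.castAdd m k) : ℂ) + (w (Fin.natAdd m k) : ℂ) * Complex.I

open Metric Set Filter Topology Complex

section Regularity

variable {E F : Type*} [NormedAddCommGroup E] [NormedSpace ℂ E]
  [NormedAddCommGroup F] [NormedSpace ℂ F]

theorem norm_sub_sub_fderiv_le_of_mapsTo_ball {f : E → F} {c z : E} {R M : ℝ}
    (hd : DifferentiableOn ℂ f (ball c R)) (h_maps : MapsTo f (ball c R) (closedBall (f c) M))
    (hz : z ∈ ball c R) :
    ‖f z - f c - fderiv ℂ f c (z - c)‖ ≤ 2 * M * (‖z - c‖ / R) ^ 2 := by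
  have hR : 0 < R := pos_of_mem_ball hz
  have hM : 0 ≤ M := nonempty_closedBall.mp ⟨_, h_maps (mem_ball_self hR)⟩
  have hf' : ‖fderiv ℂ f c‖ ≤ M / R := Complex.norm_fderiv_le_div_of_mapsTo_ball hd h_maps hR
  set g : E → F := fun w => f w - fderiv ℂ f c (w - c)
  have hgc : g c = f c := by simp [g]
  have hgd : DifferentiableOn ℂ g (ball c R) :=
    hd.sub ((fderiv ℂ f c).differentiable.comp (differentiable_id.sub_const c)).differentiableOn
  have hg_maps : MapsTo g (ball c R) (closedBall (g c) (2 * M)) := by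
    intro w hw
    rw [mem_closedBall, dist_eq_norm, hgc]
    have hw' : ‖w - c‖ ≤ R := (mem_ball_iff_norm.mp hw).le
    calc ‖f w - fderiv ℂ f c (w - c) - f c‖
        ≤ ‖f w - f c‖ + ‖fderiv ℂ f c (w - c)‖ := by
          rw [sub_right_comm]; exact norm_sub_le _ _
      _ ≤ M + M / R * R := by
          gcongr
          · exact mem_closedBall_iff_norm.mp (h_maps hw)
          · exact (fderiv ℂ f c).le_of_opNorm_le hf' _ |>.trans (by gcongr)
      _ = 2 * M := by field_simp; ring
  have hg_o : (g · - g c) =o[𝓝 c] (fun w => ‖w - c‖ ^ 1) := by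
    simp only [hgc, pow_one, g, sub_right_comm _ _ (f c)]
    exact (hd.differentiableAt (ball_mem_nhds c hR)).hasFDerivAt.isLittleO.norm_right
  have := Complex.dist_le_mul_div_pow_of_mapsTo_ball_of_isLittleO hgd hg_maps hg_o hz
  rwa [dist_eq_norm, dist_eq_norm, hgc, sub_right_comm] at this

theorem add_smul_mem_ball_two_mul {x p v : E} {t : ℂ} {R : ℝ} (hp : p ∈ ball x R)
    (ht : ‖t‖ * ‖v‖ < R) : p + t • v ∈ ball x (2 * R) := by
  rw [mem_ball_iff_norm] at hp ⊢
  calc ‖p + t • v - x‖ ≤ ‖p - x‖ + ‖t • v‖ := by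
        rw [add_sub_right_comm]; exact norm_add_le _ _
    _ < R + R := by rw [norm_smul]; exact add_lt_add hp ht
    _ = 2 * R := by ring

theorem norm_slope_sub_fderiv_apply_le {f : E → F} {x p v : E} {t : ℂ} {R M : ℝ}
    (hd : DifferentiableOn ℂ f (ball x (2 * R)))
    (h_maps : MapsTo f (ball x (2 * R)) (closedBall (f x) M))
    (hp : p ∈ ball x R) (ht0 : t ≠ 0) (ht : ‖t‖ * ‖v‖ < R) :
    ‖t⁻¹ • (f (p + t • v) - f p) - fderiv ℂ f p v‖ ≤ 4 * M * ‖v‖ ^ 2 / R ^ 2 * ‖t‖ := by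
  have hsub : ball p R ⊆ ball x (2 * R) := by
    refine ball_subset_ball' ?_
    rw [mem_ball] at hp
    linarith
  have hp_maps : MapsTo f (ball p R) (closedBall (f p) (2 * M)) := by
    intro w hw
    rw [mem_closedBall]
    calc dist (f w) (f p) ≤ dist (f w) (f x) + dist (f p) (f x) := dist_triangle_right _ _ _
      _ ≤ M + M :=
        add_le_add (h_maps (hsub hw)) (h_maps (hsub (mem_ball_self (pos_of_mem_ball hp))))
      _ = 2 * M := by ring
  have hz : p + t • v ∈ ball p R := by
    rwa [mem_ball_iff_norm, add_sub_cancel_left, norm_smul]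
  have key := norm_sub_sub_fderiv_le_of_mapsTo_ball (hd.mono hsub) hp_maps hz
  rw [add_sub_cancel_left, norm_smul] at key
  calc ‖t⁻¹ • (f (p + t • v) - f p) - fderiv ℂ f p v‖
      = ‖t‖⁻¹ * ‖f (p + t • v) - f p - fderiv ℂ f p (t • v)‖ := by
        rw [map_smul, ← norm_inv, ← norm_smul, smul_sub t⁻¹ (f (p + t • v) - f p),
          inv_smul_smul₀ ht0]
    _ ≤ ‖t‖⁻¹ * (2 * (2 * M) * (‖t‖ * ‖v‖ / R) ^ 2) := by gcongr
    _ = 4 * M * ‖v‖ ^ 2 / R ^ 2 * ‖t‖ := by field_simp; ring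

theorem tendstoUniformlyOn_slope_fderiv_apply {f : E → F} {x : E} {R M : ℝ} (v : E)
    (hd : DifferentiableOn ℂ f (ball x (2 * R)))
    (h_maps : MapsTo f (ball x (2 * R)) (closedBall (f x) M)) :
    TendstoUniformlyOn (fun (t : ℂ) p => t⁻¹ • (f (p + t • v) - f p))
      (fun p => fderiv ℂ f p v) (𝓝[≠] 0) (ball x R) := by
  rcases le_or_gt R 0 with hR | hR
  · rw [ball_eq_empty.mpr hR]; exact tendstoUniformlyOn_empty
  rw [Metric.tendstoUniformlyOn_iff]
  intro ε hε
  set K := 4 * M * ‖v‖ ^ 2 / R ^ 2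
  have hsmall : ∀ᶠ t : ℂ in 𝓝 0, ‖t‖ * ‖v‖ < R ∧ K * ‖t‖ < ε := by
    have h1 : Tendsto (fun t : ℂ => ‖t‖ * ‖v‖) (𝓝 0) (𝓝 0) :=
      Continuous.tendsto' (by fun_prop) 0 0 (by simp)
    have h2 : Tendsto (fun t : ℂ => K * ‖t‖) (𝓝 0) (𝓝 0) :=
      Continuous.tendsto' (by fun_prop) 0 0 (by simp)
    exact (h1.eventually (gt_mem_nhds hR)).and (h2.eventually (gt_mem_nhds hε))
  filter_upwards [nhdsWithin_le_nhds hsmall, self_mem_nhdsWithin] with t ht ht0 p hp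
  rw [dist_comm, dist_eq_norm]
  exact (norm_slope_sub_fderiv_apply_le hd h_maps hp ht0 ht.1).trans_lt ht.2

theorem differentiableAt_of_tendstoUniformlyOn_ball [CompleteSpace F] {ι : Type*}
    {l : Filter ι} [l.NeBot] {G : ι → E → F} {g : E → F} {x : E} {r : ℝ} (hr : 0 < r)
    (hG : TendstoUniformlyOn G g l (ball x r))
    (hGd : ∀ᶠ n in l, DifferentiableOn ℂ (G n) (ball x r)) :
    DifferentiableAt ℂ g x := by
  have hsub : ∀ y ∈ ball x (r / 2), ball y (r / 2) ⊆ ball x r := fun y hy =>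
    ball_subset_ball' (by rw [mem_ball] at hy; linarith)
  have hmem : ∀ y ∈ ball x (r / 2), y ∈ ball x r := fun y hy =>
    hsub y hy (mem_ball_self (by positivity))
  -- Cauchy estimates turn uniform closeness of the `G n` into that of their derivatives.
  have hcauchy : UniformCauchySeqOn (fun n => fderiv ℂ (G n)) l (ball x (r / 2)) := by
    intro u hu
    obtain ⟨ε, hε, hεu⟩ := Metric.mem_uniformity_dist.mp hu
    filter_upwards [hG.uniformCauchySeqOn _ (dist_mem_uniformity (by positivity : 0 < ε * r / 8)),
      hGd.prod_mk hGd] with n hclose ⟨hd₁, hd₂⟩ y hy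
    have hdy : ∀ k : ι, DifferentiableOn ℂ (G k) (ball x r) → DifferentiableAt ℂ (G k) y :=
      fun k hk => hk.differentiableAt (isOpen_ball.mem_nhds (hmem y hy))
    have hmaps : MapsTo (fun z => G n.1 z - G n.2 z) (ball y (r / 2))
        (closedBall (G n.1 y - G n.2 y) (ε * r / 4)) := by
      intro z hz
      rw [mem_closedBall, dist_eq_norm]
      calc ‖G n.1 z - G n.2 z - (G n.1 y - G n.2 y)‖
          ≤ ‖G n.1 z - G n.2 z‖ + ‖G n.1 y - G n.2 y‖ := norm_sub_le _ _
        _ ≤ ε * r / 8 + ε * r / 8 := by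
          rw [← dist_eq_norm, ← dist_eq_norm]
          exact add_le_add (hclose z (hsub y hy hz)).le (hclose y (hmem y hy)).le
        _ = ε * r / 4 := by ring
    have hbound := Complex.norm_fderiv_le_div_of_mapsTo_ball
      ((hd₁.sub hd₂).mono (hsub y hy)) hmaps (by positivity)
    refine hεu ?_
    rw [dist_eq_norm, ← fderiv_sub (hdy _ hd₁) (hdy _ hd₂)]
    calc ‖fderiv ℂ (fun z => G n.1 z - G n.2 z) y‖ ≤ ε * r / 4 / (r / 2) := hbound
      _ = ε / 2 := by field_simp; ring
      _ < ε := half_lt_self hε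
  have hlim : ∀ y ∈ ball x (r / 2), ∃ L, Tendsto (fun n => fderiv ℂ (G n) y) l (𝓝 L) :=
    fun y hy => cauchy_map_iff_exists_tendsto.mp (hcauchy.cauchy_map hy)
  choose! G' hG' using hlim
  refine (hasFDerivAt_of_tendstoUniformlyOnFilter (l := l) (f := G)
    (f' := fun n => fderiv ℂ (G n)) (g' := G') ?_ ?_ ?_).differentiableAt
  · exact (tendstoUniformlyOn_iff_tendstoUniformlyOnFilter.mp
      (hcauchy.tendstoUniformlyOn_of_tendsto hG')).mono_right
      (le_principal_iff.mpr (ball_mem_nhds x (by positivity)))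
  · filter_upwards [hGd.prod_mk (ball_mem_nhds x hr)] with n ⟨hn, hy⟩
    exact (hn.differentiableAt (isOpen_ball.mem_nhds hy)).hasFDerivAt
  · filter_upwards [ball_mem_nhds x hr] with y hy using hG.tendsto_at hy

theorem DifferentiableOn.fderiv_apply [CompleteSpace F] {f : E → F} {U : Set E}
    (hf : DifferentiableOn ℂ f U) (hU : IsOpen U) (v : E) :
    DifferentiableOn ℂ (fun z => fderiv ℂ f z v) U := by
  intro x hx
  obtain ⟨ε, hε, hεU⟩ := Metric.isOpen_iff.mp hU x hx
  obtain ⟨δ, hδ, hδf⟩ := Metric.continuousAt_iff.mp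
    ((hf.differentiableAt (hU.mem_nhds hx)).continuousAt) 1 one_pos
  set R := min ε δ / 2
  have hR : 0 < R := by positivity
  have hball : ball x (2 * R) ⊆ U ∩ ball x δ := by
    rw [show 2 * R = min ε δ by ring]
    exact subset_inter ((ball_subset_ball (min_le_left _ _)).trans hεU)
      (ball_subset_ball (min_le_right _ _))
  have hd : DifferentiableOn ℂ f (ball x (2 * R)) := hf.mono (hball.trans inter_subset_left)
  have h_maps : MapsTo f (ball x (2 * R)) (closedBall (f x) 1) := fun y hy =>
    (hδf (hball hy).2).le
  have hslope : ∀ᶠ t : ℂ in 𝓝[≠] 0,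
      DifferentiableOn ℂ (fun p => t⁻¹ • (f (p + t • v) - f p)) (ball x R) := by
    have ht : Tendsto (fun t : ℂ => ‖t‖ * ‖v‖) (𝓝 0) (𝓝 0) :=
      Continuous.tendsto' (by fun_prop) 0 0 (by simp)
    filter_upwards [nhdsWithin_le_nhds (ht.eventually (gt_mem_nhds hR))] with t ht p hp
    have hp' : p ∈ ball x (2 * R) := ball_subset_ball (by linarith) hp
    refine (((hd.differentiableAt (isOpen_ball.mem_nhds ?_)).comp p
      (differentiableAt_id.add_const _)).sub
      (hd.differentiableAt (isOpen_ball.mem_nhds hp'))).const_smul _ |>.differentiableWithinAt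
    exact add_smul_mem_ball_two_mul hp ht
  exact (differentiableAt_of_tendstoUniformlyOn_ball hR
    (tendstoUniformlyOn_slope_fderiv_apply v hd h_maps) hslope).differentiableWithinAt

end Regularity

section Embedding

variable {m : ℕ}

def embL (m : ℕ) : (Fin (m + m) → ℝ) →L[ℝ] (Fin m → ℂ) :=
  ContinuousLinearMap.pi fun k =>
    ofRealCLM.comp (ContinuousLinearMap.proj (Fin.castAdd m k)) +
      (I • ofRealCLM).comp (ContinuousLinearMap.proj (Fin.natAdd m k))

theorem coe_embL : ⇑(embL m) = emb := by
  funext w k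
  simp [embL, emb]
  ring

theorem embL_single_castAdd (k : Fin m) :
    embL m (Pi.single (Fin.castAdd m k) 1) = Pi.single k 1 := by
  funext j
  have hne : j.addNat m ≠ Fin.castAdd m k := by simp [Fin.ext_iff]; omega
  rcases eq_or_ne j k with rfl | hjk
  · simp [embL, hne]
  · simp [embL, hne, hjk]

theorem embL_single_natAdd (k : Fin m) :
    embL m (Pi.single (Fin.natAdd m k) 1) = I • Pi.single k 1 := by
  funext j
  have hne : Fin.castAdd m j ≠ k.addNat m := by simp [Fin.ext_iff]; omega
  rcases eq_or_ne j k with rfl | hjk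
  · simp [embL, hne]
  · simp [embL, hne, hjk]

theorem pd_congr {N : ℕ} {f g : (Fin N → ℝ) → ℝ} {x : Fin N → ℝ} (hfg : f =ᶠ[𝓝 x] g)
    (i : Fin N) : pd f i x = pd g i x := by
  rw [pd, pd, hfg.fderiv_eq]

theorem pd_comp_emb (T : ℂ →L[ℝ] ℝ) {g : (Fin m → ℂ) → ℂ} {w : Fin (m + m) → ℝ}
    (hg : DifferentiableAt ℂ g (emb w)) (i : Fin (m + m)) :
    pd (fun x => T (g (emb x))) i w = T (fderiv ℂ g (emb w) (embL m (Pi.single i 1))) := by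
  have hemb : HasFDerivAt emb (embL m) w := coe_embL (m := m) ▸ (embL m).hasFDerivAt
  have hcomp : HasFDerivAt (fun x => T (g (emb x)))
      (T.comp (((fderiv ℂ g (emb w)).restrictScalars ℝ).comp (embL m))) w :=
    T.hasFDerivAt.comp w ((hg.hasFDerivAt.restrictScalars ℝ).comp w hemb)
  rw [pd, hcomp.fderiv]
  rfl

theorem pd_pd_comp_emb (T : ℂ →L[ℝ] ℝ) {Ω : Set (Fin m → ℂ)} (hΩ : IsOpen Ω)
    {h : (Fin m → ℂ) → ℂ} (hh : DifferentiableOn ℂ h Ω) {w : Fin (m + m) → ℝ}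
    (hw : emb w ∈ Ω) (i j : Fin (m + m)) :
    pd (pd (fun x => T (h (emb x))) j) i w =
      T (fderiv ℂ (fun z => fderiv ℂ h z (embL m (Pi.single j 1))) (emb w)
        (embL m (Pi.single i 1))) := by
  have hU : IsOpen (emb ⁻¹' Ω) := hΩ.preimage (coe_embL (m := m) ▸ (embL m).continuous)
  have hpd : pd (fun x => T (h (emb x))) j =ᶠ[𝓝 w]
      fun x => T (fderiv ℂ h (emb x) (embL m (Pi.single j 1))) := by
    filter_upwards [hU.mem_nhds hw] with x hx
    exact pd_comp_emb T (hh.differentiableAt (hΩ.mem_nhds hx)) j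
  rw [pd_congr hpd]
  exact pd_comp_emb T ((hh.fderiv_apply hΩ _).differentiableAt (hΩ.mem_nhds hw)) i

end Embedding

section Identities

variable {m : ℕ}

theorem cpd_const_mul (c : ℂ) (g : (Fin m → ℂ) → ℂ) (k : Fin m) :
    cpd (fun z => c * g z) k = fun p => c * cpd g k p := by
  funext p
  exact congrArg (· (Pi.single k 1)) (congrFun (fderiv_const_smul_field (𝕜 := ℂ) c (f := g)) p)

theorem fderiv_embL_single_castAdd (g : (Fin m → ℂ) → ℂ) (p : Fin m → ℂ) (k : Fin m) :
    fderiv ℂ g p (embL m (Pi.single (Fin.castAdd m k) 1)) = cpd g k p := by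
  rw [embL_single_castAdd]; rfl

theorem fderiv_embL_single_natAdd (g : (Fin m → ℂ) → ℂ) (p : Fin m → ℂ) (k : Fin m) :
    fderiv ℂ g p (embL m (Pi.single (Fin.natAdd m k) 1)) = I * cpd g k p := by
  rw [embL_single_natAdd, map_smul, smul_eq_mul]; rfl

theorem lap_comp_emb (T : ℂ →L[ℝ] ℝ) {Ω : Set (Fin m → ℂ)} (hΩ : IsOpen Ω)
    {h : (Fin m → ℂ) → ℂ} (hh : DifferentiableOn ℂ h Ω) {w : Fin (m + m) → ℝ}
    (hw : emb w ∈ Ω) : lap (fun x => T (h (emb x))) w = 0 := by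
  simp only [lap, pd_pd_comp_emb T hΩ hh hw, Fin.sum_univ_add, fderiv_embL_single_castAdd,
    fderiv_embL_single_natAdd, cpd_const_mul, ← mul_assoc, I_mul_I, neg_one_mul, map_neg,
    ← Finset.sum_add_distrib, add_neg_cancel, Finset.sum_const_zero]

theorem sum_pd_mul_pd_comp_emb (T S : ℂ →L[ℝ] ℝ) {h : (Fin m → ℂ) → ℂ}
    {w : Fin (m + m) → ℝ} (hd : DifferentiableAt ℂ h (emb w)) :
    ∑ i, pd (fun x => T (h (emb x))) i w * pd (fun x => S (h (emb x))) i w =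
      ∑ k, (T (cpd h k (emb w)) * S (cpd h k (emb w)) +
        T (I * cpd h k (emb w)) * S (I * cpd h k (emb w))) := by
  simp only [pd_comp_emb T hd, pd_comp_emb S hd, Fin.sum_univ_add, fderiv_embL_single_castAdd,
    fderiv_embL_single_natAdd, Finset.sum_add_distrib]

theorem infLap_comp_emb (T : ℂ →L[ℝ] ℝ) {Ω : Set (Fin m → ℂ)} (hΩ : IsOpen Ω)
    {h : (Fin m → ℂ) → ℂ} (hh : DifferentiableOn ℂ h Ω) {w : Fin (m + m) → ℝ}
    (hw : emb w ∈ Ω) :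
    infLap (fun x => T (h (emb x))) w =
      ∑ k, ∑ l, (T (cpd h k (emb w)) * T (cpd h l (emb w)) * T (cpd (cpd h l) k (emb w)) +
        T (cpd h k (emb w)) * T (I * cpd h l (emb w)) * T (I * cpd (cpd h l) k (emb w)) +
        T (I * cpd h k (emb w)) * T (cpd h l (emb w)) * T (I * cpd (cpd h l) k (emb w)) -
        T (I * cpd h k (emb w)) * T (I * cpd h l (emb w)) * T (cpd (cpd h l) k (emb w))) := by
  have hd : DifferentiableAt ℂ h (emb w) := hh.differentiableAt (hΩ.mem_nhds hw)
  simp only [infLap, pd_pd_comp_emb T hΩ hh hw, pd_comp_emb T hd, Fin.sum_univ_add,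
    fderiv_embL_single_castAdd, fderiv_embL_single_natAdd, cpd_const_mul, ← mul_assoc, I_mul_I,
    neg_one_mul, map_neg, mul_neg, Finset.sum_add_distrib, Finset.sum_sub_distrib,
    Finset.sum_neg_distrib]
  ring

theorem infLap_re_comp_emb {Ω : Set (Fin m → ℂ)} (hΩ : IsOpen Ω)
    {h : (Fin m → ℂ) → ℂ} (hh : DifferentiableOn ℂ h Ω) {w : Fin (m + m) → ℝ}
    (hw : emb w ∈ Ω) :
    infLap (fun x => (h (emb x)).re) w = (∑ i, ∑ j,
      starRingEnd ℂ (cpd (cpd h j) i (emb w)) * cpd h i (emb w) * cpd h j (emb w)).re := by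
  refine (infLap_comp_emb reCLM hΩ hh hw).trans ?_
  rw [re_sum]
  refine Finset.sum_congr rfl fun k _ => ?_
  rw [re_sum]
  refine Finset.sum_congr rfl fun l _ => ?_
  simp only [reCLM_apply, mul_re, mul_im, I_re, I_im, conj_re, conj_im]
  ring

theorem infLap_im_comp_emb {Ω : Set (Fin m → ℂ)} (hΩ : IsOpen Ω)
    {h : (Fin m → ℂ) → ℂ} (hh : DifferentiableOn ℂ h Ω) {w : Fin (m + m) → ℝ}
    (hw : emb w ∈ Ω) :
    infLap (fun x => (h (emb x)).im) w = (∑ i, ∑ j,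
      starRingEnd ℂ (cpd (cpd h j) i (emb w)) * cpd h i (emb w) * cpd h j (emb w)).im := by
  refine (infLap_comp_emb imCLM hΩ hh hw).trans ?_
  rw [im_sum]
  refine Finset.sum_congr rfl fun k _ => ?_
  rw [im_sum]
  refine Finset.sum_congr rfl fun l _ => ?_
  simp only [imCLM_apply, mul_re, mul_im, I_re, I_im, conj_re, conj_im]
  ring

theorem sum_pd_re_sq_comp_emb {h : (Fin m → ℂ) → ℂ} {w : Fin (m + m) → ℝ}
    (hd : DifferentiableAt ℂ h (emb w)) :
    ∑ i, pd (fun x => (h (emb x)).re) i w ^ 2 = ∑ k, normSq (cpd h k (emb w)) := by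
  simp only [sq]
  refine (sum_pd_mul_pd_comp_emb reCLM reCLM hd).trans (Finset.sum_congr rfl fun k _ => ?_)
  simp only [reCLM_apply, mul_re, I_re, I_im, normSq_apply]
  ring

theorem sum_pd_im_sq_comp_emb {h : (Fin m → ℂ) → ℂ} {w : Fin (m + m) → ℝ}
    (hd : DifferentiableAt ℂ h (emb w)) :
    ∑ i, pd (fun x => (h (emb x)).im) i w ^ 2 = ∑ k, normSq (cpd h k (emb w)) := by
  simp only [sq]
  refine (sum_pd_mul_pd_comp_emb imCLM imCLM hd).trans (Finset.sum_congr rfl fun k _ => ?_)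
  simp only [imCLM_apply, mul_im, I_re, I_im, normSq_apply]
  ring

theorem sum_pd_re_mul_pd_im_comp_emb {h : (Fin m → ℂ) → ℂ} {w : Fin (m + m) → ℝ}
    (hd : DifferentiableAt ℂ h (emb w)) :
    ∑ i, pd (fun x => (h (emb x)).re) i w * pd (fun x => (h (emb x)).im) i w = 0 := by
  refine (sum_pd_mul_pd_comp_emb reCLM imCLM hd).trans (Finset.sum_eq_zero fun k _ => ?_)
  simp only [reCLM_apply, imCLM_apply, mul_re, mul_im, I_re, I_im]
  ring

end Identities

/-- If `h` is holomorphic on an open `Ω ⊆ ℂ^m` and belongs to the class `𝒯^m`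
(i.e. `Σᵢⱼ conj(h_{zᵢzⱼ})·h_{zᵢ}·h_{zⱼ} = μ·h` for a real-valued `μ`), then
`u = Re h` and `v = Im h` are orthogonal twin-harmonics on the corresponding
open subset of `ℝ^(2m)`. -/
theorem re_im_twinHarmonics {m : ℕ} (Ω : Set (Fin m → ℂ)) (hΩ : IsOpen Ω)
    (h : (Fin m → ℂ) → ℂ) (hh : DifferentiableOn ℂ h Ω)
    (μ : (Fin m → ℂ) → ℝ)
    (hT : ∀ z ∈ Ω, ∑ i, ∑ j,
        (starRingEnd ℂ) (cpd (cpd h j) i z) * cpd h i z * cpd h j z = (μ z : ℂ) * h z) :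
    ∀ w : Fin (m + m) → ℝ, emb w ∈ Ω →
      (fun x => (h (emb x)).im) w * lap (fun x => (h (emb x)).re) w
          = (fun x => (h (emb x)).re) w * lap (fun x => (h (emb x)).im) w ∧
      (fun x => (h (emb x)).im) w * infLap (fun x => (h (emb x)).re) w
          = (fun x => (h (emb x)).re) w * infLap (fun x => (h (emb x)).im) w ∧
      (∑ i, pd (fun x => (h (emb x)).re) i w ^ 2)
          = (∑ i, pd (fun x => (h (emb x)).im) i w ^ 2) ∧
      (∑ i, pd (fun x => (h (emb x)).re) i w * pd (fun x => (h (emb x)).im) i w) = 0 := by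
  intro w hw
  have hd : DifferentiableAt ℂ h (emb w) := hh.differentiableAt (hΩ.mem_nhds hw)
  have hlap_re : lap (fun x => (h (emb x)).re) w = 0 := lap_comp_emb reCLM hΩ hh hw
  have hlap_im : lap (fun x => (h (emb x)).im) w = 0 := lap_comp_emb imCLM hΩ hh hw
  refine ⟨?_, ?_, ?_, sum_pd_re_mul_pd_im_comp_emb hd⟩
  · rw [hlap_re, hlap_im, mul_zero, mul_zero]
  · rw [infLap_re_comp_emb hΩ hh hw, infLap_im_comp_emb hΩ hh hw, hT _ hw, re_ofReal_mul,
      im_ofReal_mul]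
    ring
  · rw [sum_pd_re_sq_comp_emb hd, sum_pd_im_sq_comp_emb hd]
end
end

section
/- Let h be a holomorphic function on an open set Ω ⊆ ℂ^m belonging to the class 𝒯^m with h(z) ≠ 0 for all z ∈ Ω. Then for every c ∈ ℂ and every integer r, the function H(z) = c·h(z)^r belongs to the class 𝒯^m on Ω: there is a real-valued function μ₁ on Ω with Σ_{i,j=1}^m conj(H_{z_iz_j})·H_{z_i}·H_{z_j} = μ₁·H on Ω. -/
/-!
Write `H = F ∘ h` with `F w = c w ^ r`. The chain rule gives `H_i = F'(h) h_i` and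
`H_ij = F''(h) h_i h_j + F'(h) h_ij`, hence
`Σ conj(H_ij) H_i H_j = conj(F''(h)) F'(h)² |∇h|⁴ + |F'(h)|² F'(h) Σ conj(h_ij) h_i h_j`.
Since `F'(w) w = r F(w)` and `conj(F''(w)) F'(w)² = |c|² r³ (r - 1) |w ^ (r - 2)|² F(w)`, the
hypothesis `Σ conj(h_ij) h_i h_j = μ h` makes both terms real multiples of `H`.
-/

noncomputable section

open Complex ComplexConjugate Filter Topology

variable {m : ℕ}

theorem cpd_const (a : ℂ) (i : Fin m) : cpd (fun _ => a) i = 0 := by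
  ext z
  simp [cpd]

theorem HasFDerivAt.cpd_eq {h : (Fin m → ℂ) → ℂ} {L : (Fin m → ℂ) →L[ℂ] ℂ} {z : Fin m → ℂ}
    (hL : HasFDerivAt h L z) (i : Fin m) : cpd h i z = L (Pi.single i 1) := by
  rw [cpd, hL.fderiv]

theorem Filter.EventuallyEq.cpd_eq {f g : (Fin m → ℂ) → ℂ} {z : Fin m → ℂ} (hfg : f =ᶠ[𝓝 z] g)
    (i : Fin m) : cpd f i z = cpd g i z := by
  rw [cpd, cpd, hfg.fderiv_eq]

theorem cpd_comp {F : ℂ → ℂ} {F' : ℂ} {h : (Fin m → ℂ) → ℂ} {z : Fin m → ℂ}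
    (hF : HasDerivAt F F' (h z)) (hh : DifferentiableAt ℂ h z) (i : Fin m) :
    cpd (fun w => F (h w)) i z = F' * cpd h i z := by
  rw [show (fun w => F (h w)) = F ∘ h from rfl, (hF.comp_hasFDerivAt z hh.hasFDerivAt).cpd_eq]
  rfl

theorem cpd_mul {f g : (Fin m → ℂ) → ℂ} {z : Fin m → ℂ} (hf : DifferentiableAt ℂ f z)
    (hg : DifferentiableAt ℂ g z) (i : Fin m) :
    cpd (fun w => f w * g w) i z = cpd f i z * g z + f z * cpd g i z := by
  rw [show (fun w => f w * g w) = f * g from rfl, (hf.hasFDerivAt.mul hg.hasFDerivAt).cpd_eq]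
  simp only [add_apply, smul_apply, smul_eq_mul, cpd]
  ring

theorem cpd_of_not_differentiableAt {f : (Fin m → ℂ) → ℂ} {z : Fin m → ℂ}
    (hf : ¬DifferentiableAt ℂ f z) (i : Fin m) : cpd f i z = 0 := by
  rw [cpd, fderiv_zero_of_not_differentiableAt hf, zero_apply]

section Comp

open scoped Classical

variable {Ω : Set (Fin m → ℂ)} {h : (Fin m → ℂ) → ℂ} {F F' F'' : ℂ → ℂ} {z : Fin m → ℂ}

theorem cpd_comp_eventuallyEq (hΩ : IsOpen Ω) (hh : DifferentiableOn ℂ h Ω)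
    (hF : ∀ z ∈ Ω, HasDerivAt F (F' (h z)) (h z)) (hz : z ∈ Ω) (j : Fin m) :
    cpd (fun w => F (h w)) j =ᶠ[𝓝 z] fun w => F' (h w) * cpd h j w :=
  eventually_of_mem (hΩ.mem_nhds hz) fun w hw =>
    cpd_comp (hF w hw) (hh.differentiableAt (hΩ.mem_nhds hw)) j

theorem cpd_cpd_comp_of_differentiableAt (hΩ : IsOpen Ω) (hh : DifferentiableOn ℂ h Ω)
    (hF : ∀ z ∈ Ω, HasDerivAt F (F' (h z)) (h z)) (hF' : ∀ z ∈ Ω, HasDerivAt F' (F'' (h z)) (h z))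
    (hz : z ∈ Ω) {j : Fin m} (hj : DifferentiableAt ℂ (cpd h j) z) (i : Fin m) :
    cpd (cpd (fun w => F (h w)) j) i z
      = F'' (h z) * cpd h i z * cpd h j z + F' (h z) * cpd (cpd h j) i z := by
  have hhz := hh.differentiableAt (hΩ.mem_nhds hz)
  have hF'h : DifferentiableAt ℂ (fun w => F' (h w)) z :=
    ((hF' z hz).comp_hasFDerivAt z hhz.hasFDerivAt).differentiableAt
  rw [(cpd_comp_eventuallyEq hΩ hh hF hz j).cpd_eq, cpd_mul hF'h hj, cpd_comp (hF' z hz) hhz]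

theorem differentiableAt_cpd_of_differentiableAt_cpd_comp (hΩ : IsOpen Ω)
    (hh : DifferentiableOn ℂ h Ω) (hF : ∀ z ∈ Ω, HasDerivAt F (F' (h z)) (h z))
    (hF' : ∀ z ∈ Ω, DifferentiableAt ℂ F' (h z)) (hne : ∀ z ∈ Ω, F' (h z) ≠ 0) (hz : z ∈ Ω)
    {j : Fin m} (hj : DifferentiableAt ℂ (cpd (fun w => F (h w)) j) z) :
    DifferentiableAt ℂ (cpd h j) z := by
  have hrecip : cpd h j =ᶠ[𝓝 z] fun w => (F' (h w))⁻¹ * cpd (fun w => F (h w)) j w := by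
    filter_upwards [cpd_comp_eventuallyEq hΩ hh hF hz j, hΩ.mem_nhds hz] with w hw hwΩ
    rw [hw, inv_mul_cancel_left₀ (hne w hwΩ)]
  have hF'h : DifferentiableAt ℂ (fun w => F' (h w)) z :=
    (hF' z hz).comp z (hh.differentiableAt (hΩ.mem_nhds hz))
  exact hrecip.differentiableAt_iff.2 ((hF'h.inv (hne z hz)).mul hj)

/- Mathlib does not know that the partials of a holomorphic function on `ℂ^m` are again
holomorphic. Where `cpd h j` is not differentiable, both second partials take the junk value `0`
and the `F''` term drops out; in the weight this only replaces `|∇h|⁴` by a product of two real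
sums. -/
theorem cpd_cpd_comp (hΩ : IsOpen Ω) (hh : DifferentiableOn ℂ h Ω)
    (hF : ∀ z ∈ Ω, HasDerivAt F (F' (h z)) (h z)) (hF' : ∀ z ∈ Ω, HasDerivAt F' (F'' (h z)) (h z))
    (hne : ∀ z ∈ Ω, F' (h z) ≠ 0) (hz : z ∈ Ω) (i j : Fin m) :
    cpd (cpd (fun w => F (h w)) j) i z
      = (if DifferentiableAt ℂ (cpd h j) z then F'' (h z) * cpd h i z * cpd h j z else 0)
        + F' (h z) * cpd (cpd h j) i z := by
  by_cases hj : DifferentiableAt ℂ (cpd h j) z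
  · rw [if_pos hj, cpd_cpd_comp_of_differentiableAt hΩ hh hF hF' hz hj]
  · have hFj : ¬DifferentiableAt ℂ (cpd (fun w => F (h w)) j) z := fun hFj =>
      hj (differentiableAt_cpd_of_differentiableAt_cpd_comp hΩ hh hF
        (fun z hz => (hF' z hz).differentiableAt) hne hz hFj)
    rw [if_neg hj, cpd_of_not_differentiableAt hj, cpd_of_not_differentiableAt hFj]
    ring

theorem sum_conj_cpd_cpd_comp (hΩ : IsOpen Ω) (hh : DifferentiableOn ℂ h Ω)
    (hF : ∀ z ∈ Ω, HasDerivAt F (F' (h z)) (h z)) (hF' : ∀ z ∈ Ω, HasDerivAt F' (F'' (h z)) (h z))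
    (hne : ∀ z ∈ Ω, F' (h z) ≠ 0) (hz : z ∈ Ω) :
    ∑ i, ∑ j, conj (cpd (cpd (fun w => F (h w)) j) i z) * cpd (fun w => F (h w)) i z *
        cpd (fun w => F (h w)) j z
      = conj (F'' (h z)) * F' (h z) ^ 2 * ((∑ i, normSq (cpd h i z)) *
          ∑ j with DifferentiableAt ℂ (cpd h j) z, normSq (cpd h j z) : ℝ)
        + normSq (F' (h z)) * F' (h z) *
          ∑ i, ∑ j, conj (cpd (cpd h j) i z) * cpd h i z * cpd h j z := by
  have hhz := hh.differentiableAt (hΩ.mem_nhds hz)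
  simp only [cpd_cpd_comp hΩ hh hF hF' hne hz, cpd_comp (hF z hz) hhz]
  rw [Finset.sum_filter]
  simp only [ofReal_mul, ofReal_sum, apply_ite ofReal, ofReal_zero]
  rw [Finset.sum_mul_sum, Finset.mul_sum, Finset.mul_sum, ← Finset.sum_add_distrib]
  refine Finset.sum_congr rfl fun i _ => ?_
  rw [Finset.mul_sum, Finset.mul_sum, ← Finset.sum_add_distrib]
  refine Finset.sum_congr rfl fun j _ => ?_
  split_ifs <;> simp only [map_mul, map_add, map_zero, ← mul_conj] <;> ring

end Comp

theorem hasDerivAt_const_mul_zpow (c : ℂ) (r : ℤ) {x : ℂ} (hx : x ≠ 0) :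
    HasDerivAt (fun x => c * x ^ r) (c * r * x ^ (r - 1)) x := by
  simpa only [mul_assoc] using (hasDerivAt_zpow r x (.inl hx)).const_mul c

/-- If `h ∈ 𝒯^m` is nonvanishing on an open `Ω ⊆ ℂ^m`, then for every `c ∈ ℂ` and
every integer `r`, the function `H = c·h^r` belongs to `𝒯^m` on `Ω`. -/
theorem class_T_smul_zpow {m : ℕ} (Ω : Set (Fin m → ℂ)) (hΩ : IsOpen Ω)
    (h : (Fin m → ℂ) → ℂ) (hh : DifferentiableOn ℂ h Ω)
    (hne : ∀ z ∈ Ω, h z ≠ 0)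
    (μ : (Fin m → ℂ) → ℝ)
    (hT : ∀ z ∈ Ω, ∑ i, ∑ j,
        (starRingEnd ℂ) (cpd (cpd h j) i z) * cpd h i z * cpd h j z = (μ z : ℂ) * h z)
    (c : ℂ) (r : ℤ) :
    ∃ μ₁ : (Fin m → ℂ) → ℝ, ∀ z ∈ Ω,
      ∑ i, ∑ j,
          (starRingEnd ℂ) (cpd (cpd (fun w => c * h w ^ r) j) i z) *
            cpd (fun w => c * h w ^ r) i z * cpd (fun w => c * h w ^ r) j z
        = (μ₁ z : ℂ) * (c * h z ^ r) := by
  classical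
  by_cases hcr : c * r = 0
  · obtain ⟨a, hconst⟩ : ∃ a : ℂ, (fun w => c * h w ^ r) = fun _ => a := by
      rcases mul_eq_zero.1 hcr with rfl | hr
      · exact ⟨0, by simp⟩
      · exact ⟨c, by simp [Int.cast_eq_zero.1 hr]⟩
    exact ⟨0, fun z _ => by simp [hconst, cpd_const]⟩
  refine ⟨fun z => r * normSq (c * r * h z ^ (r - 1)) * μ z +
    normSq c * r ^ 3 * (r - 1) * normSq (h z ^ (r - 1 - 1)) * ((∑ i, normSq (cpd h i z)) *
      ∑ j with DifferentiableAt ℂ (cpd h j) z, normSq (cpd h j z)), fun z hz => ?_⟩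
  have hsum := sum_conj_cpd_cpd_comp (F' := fun x => c * r * x ^ (r - 1))
    (F'' := fun x => c * r * (r - 1 : ℤ) * x ^ (r - 1 - 1)) hΩ hh
    (fun z hz => hasDerivAt_const_mul_zpow c r (hne z hz))
    (fun z hz => hasDerivAt_const_mul_zpow (c * r) (r - 1) (hne z hz))
    (fun z hz => mul_ne_zero hcr (zpow_ne_zero _ (hne z hz))) hz
  have hpow : h z ^ r = h z ^ (r - 1) * h z := by rw [← zpow_add_one₀ (hne z hz), sub_add_cancel]
  have hpow_sub_one : h z ^ (r - 1) = h z ^ (r - 1 - 1) * h z := by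
    rw [← zpow_add_one₀ (hne z hz), sub_add_cancel]
  dsimp only
  rw [hsum, hT z hz, hpow, hpow_sub_one]
  simp only [ofReal_add, ofReal_mul, ofReal_sub, ofReal_pow, ofReal_intCast, ofReal_one,
    ← mul_conj, map_mul, map_sub, map_one, map_intCast, Int.cast_sub, Int.cast_one]
  ring
end
end
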